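/- arXiv:1806.06045 — 4 statements merged into one kernel-verified Lean document; each statement's English description precedes it below -/
import Mathlib

section
/- Let m ≥ 2 and let δ > 0 and J ≥ 1. Assume that for every j with 1 ≤ j ≤ J one has λ_1 γ_1² ≤ 4 C_2^{2j} δ · Σ_{i=2}^m λ_i γ_i². Then for every j with 1 ≤ j ≤ J, E_j ≤ 4 (1 + δ) C_2^{2j} · Σ_{i=1}^m λ_i γ_i². (Paper's Theorem 1: if the first eigencomponent of the initial CG error is small relative to the others, CG convergence in the first J iterations is governed by the reduced condition number κ_2 = λ_m/λ_2 rather than by κ_1 = λ_m/λ_1.) -/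
/-!
Take for `q` the Chebyshev polynomial `T_j` transplanted from `[-1, 1]` to `[λ₂, λ_m]` and
normalized by `q(0) = 1`, i.e. `q(x) = T_j(ℓ x) / T_j(ℓ 0)` with `ℓ x = (λ_m + λ₂ - 2x)/(λ_m - λ₂)`.
On `[λ₂, λ_m]` we have `|q| ≤ 1 / T_j(ℓ 0)`, and writing `ℓ 0 = (u + u⁻¹)/2` with `u = 1/C₂` gives
`T_j(ℓ 0) = (u^j + u^{-j})/2 ≥ C₂^{-j}/2`. On `[0, λ₂]` we have `ℓ x ∈ [1, ℓ 0]`, where `T_j` is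
positive and increasing, so `|q(λ₁)| ≤ 1`. Hence `E_j ≤ λ₁γ₁² + 4 C₂^{2j} Σ_{i≥2} λᵢγᵢ²`, and the
smallness hypothesis absorbs the first term.
-/

open Polynomial Real

namespace Polynomial.Chebyshev

theorem monotoneOn_eval_T_real (n : ℤ) : MonotoneOn (fun x ↦ (T ℝ n).eval x) (Set.Ici 1) := by
  intro x hx y hy hxy
  dsimp only
  rw [← cosh_arcosh hx, ← cosh_arcosh hy, T_real_cosh, T_real_cosh, cosh_le_cosh, abs_mul, abs_mul,
    abs_of_nonneg (arcosh_nonneg hx), abs_of_nonneg (arcosh_nonneg hy)]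
  gcongr
  exact (arcosh_le_arcosh (by linarith [hx.out]) (by linarith [hy.out])).mpr hxy

theorem eval_T_real_half_add_inv {u : ℝ} (hu : 0 < u) (n : ℕ) :
    (T ℝ n).eval ((u + u⁻¹) / 2) = (u ^ n + u⁻¹ ^ n) / 2 := by
  have hcosh : (u + u⁻¹) / 2 = cosh (log u) := by rw [cosh_eq, exp_neg, exp_log hu]
  rw [hcosh, T_real_cosh, cosh_eq, exp_neg, Int.cast_natCast, exp_nat_mul, exp_log hu, inv_pow]

end Polynomial.Chebyshev

open Polynomial.Chebyshev

noncomputable section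

def convergenceFactor (κ : ℝ) : ℝ := (√κ - 1) / (√κ + 1)

theorem convergenceFactor_pos {κ : ℝ} (hκ : 1 < κ) : 0 < convergenceFactor κ := by
  have : 1 < √κ := by rwa [lt_sqrt zero_le_one, one_pow]
  exact div_pos (by linarith) (by linarith)

theorem convergenceFactor_one : convergenceFactor 1 = 0 := by simp [convergenceFactor]

theorem half_inv_convergenceFactor_add {κ : ℝ} (hκ : 1 < κ) :
    ((convergenceFactor κ)⁻¹ + convergenceFactor κ) / 2 = (κ + 1) / (κ - 1) := by
  obtain ⟨s, hs, rfl⟩ : ∃ s, 1 < s ∧ κ = s ^ 2 :=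
    ⟨√κ, by rwa [lt_sqrt zero_le_one, one_pow], (sq_sqrt (by linarith)).symm⟩
  have : s - 1 ≠ 0 := by linarith
  have : s ^ 2 - 1 ≠ 0 := by nlinarith
  rw [convergenceFactor, sqrt_sq (by linarith), inv_div]
  field_simp
  ring

theorem inv_pow_convergenceFactor_le_two_mul_eval_T {a b : ℝ} (ha : 0 < a) (hab : a < b) (n : ℕ) :
    (convergenceFactor (b / a) ^ n)⁻¹ ≤ 2 * (T ℝ n).eval ((b + a) / (b - a)) := by
  have hκ : 1 < b / a := (one_lt_div ha).mpr hab
  have hC := convergenceFactor_pos hκ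
  have hpt : (b + a) / (b - a) =
      ((convergenceFactor (b / a))⁻¹ + (convergenceFactor (b / a))⁻¹⁻¹) / 2 := by
    rw [inv_inv, half_inv_convergenceFactor_add hκ]
    field_simp
  rw [hpt, eval_T_real_half_add_inv (inv_pos.mpr hC), inv_pow]
  have : 0 ≤ (convergenceFactor (b / a))⁻¹⁻¹ ^ n := by positivity
  linarith

def chebyshevResidual (a b : ℝ) (n : ℕ) : ℝ[X] :=
  C ((T ℝ n).eval ((b + a) / (b - a)))⁻¹ *
    (T ℝ n).comp (C ((b + a) / (b - a)) - C (2 / (b - a)) * X)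

theorem eval_chebyshevResidual (a b : ℝ) (n : ℕ) (x : ℝ) :
    (chebyshevResidual a b n).eval x =
      (T ℝ n).eval ((b + a - 2 * x) / (b - a)) / (T ℝ n).eval ((b + a) / (b - a)) := by
  simp only [chebyshevResidual, eval_mul, eval_C, eval_comp, eval_sub, eval_X]
  rw [inv_mul_eq_div]
  congr 2
  ring

theorem natDegree_chebyshevResidual_le (a b : ℝ) (n : ℕ) :
    (chebyshevResidual a b n).natDegree ≤ n := by
  have hL : (C ((b + a) / (b - a)) - C (2 / (b - a)) * X).natDegree ≤ 1 := by compute_degree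
  refine (natDegree_C_mul_le _ _).trans (natDegree_comp_le.trans ?_)
  rw [natDegree_T, Int.natAbs_natCast]
  simpa using Nat.mul_le_mul_left n hL

theorem one_le_add_sub_two_mul_div {a b x : ℝ} (hab : a < b) (hx : x ≤ a) :
    1 ≤ (b + a - 2 * x) / (b - a) := by
  rw [le_div_iff₀ (by linarith)]; linarith

section

variable {a b : ℝ} (ha : 0 ≤ a) (hab : a < b) (n : ℕ)
include ha hab

theorem one_le_eval_T_add_div_sub : 1 ≤ (T ℝ n).eval ((b + a) / (b - a)) := by
  simpa using one_le_eval_T_real n (one_le_add_sub_two_mul_div hab ha)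

theorem eval_chebyshevResidual_zero : (chebyshevResidual a b n).eval 0 = 1 := by
  rw [eval_chebyshevResidual, mul_zero, sub_zero]
  exact div_self (by linarith [one_le_eval_T_add_div_sub ha hab n])

theorem abs_eval_chebyshevResidual_le_one {x : ℝ} (hx : x ∈ Set.Icc 0 a) :
    |(chebyshevResidual a b n).eval x| ≤ 1 := by
  have h1 := one_le_add_sub_two_mul_div hab hx.2
  have hmono : (T ℝ n).eval ((b + a - 2 * x) / (b - a)) ≤ (T ℝ n).eval ((b + a) / (b - a)) := by
    refine monotoneOn_eval_T_real n h1 (by simpa using one_le_add_sub_two_mul_div hab ha) ?_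
    exact div_le_div_of_nonneg_right (by linarith [hx.1]) (by linarith)
  have hpos := one_le_eval_T_real n h1
  rw [eval_chebyshevResidual, abs_div, abs_of_pos (by linarith), abs_of_pos (by linarith),
    div_le_one (by linarith)]
  exact hmono

end

theorem abs_eval_chebyshevResidual_le {a b : ℝ} (ha : 0 < a) (hab : a < b) (n : ℕ) {x : ℝ}
    (hx : x ∈ Set.Icc a b) :
    |(chebyshevResidual a b n).eval x| ≤ 2 * convergenceFactor (b / a) ^ n := by
  have hT : |(T ℝ n).eval ((b + a - 2 * x) / (b - a))| ≤ 1 := by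
    refine abs_eval_T_real_le_one n (abs_le.mpr ⟨?_, ?_⟩)
    · rw [le_div_iff₀ (by linarith)]; linarith [hx.2]
    · rw [div_le_one (by linarith)]; linarith [hx.1]
  have hT0 := one_le_eval_T_add_div_sub ha.le hab n
  have hC := pow_pos (convergenceFactor_pos ((one_lt_div ha).mpr hab)) n
  have key := inv_pow_convergenceFactor_le_two_mul_eval_T ha hab n
  rw [inv_le_iff_one_le_mul₀ hC] at key
  rw [eval_chebyshevResidual, abs_div, abs_of_pos (zero_lt_one.trans_le hT0),
    div_le_iff₀ (zero_lt_one.trans_le hT0)]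
  linarith

theorem exists_residual_polynomial {a b : ℝ} (ha : 0 < a) (hab : a ≤ b) {n : ℕ} (hn : 1 ≤ n) :
    ∃ q : ℝ[X], q.natDegree ≤ n ∧ q.eval 0 = 1 ∧ (∀ x ∈ Set.Icc 0 a, |q.eval x| ≤ 1) ∧
      ∀ x ∈ Set.Icc a b, |q.eval x| ≤ 2 * convergenceFactor (b / a) ^ n := by
  rcases hab.lt_or_eq with hab | rfl
  · exact ⟨chebyshevResidual a b n, natDegree_chebyshevResidual_le a b n,
      eval_chebyshevResidual_zero ha.le hab n,
      fun x hx ↦ abs_eval_chebyshevResidual_le_one ha.le hab n hx,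
      fun x hx ↦ abs_eval_chebyshevResidual_le ha hab n hx⟩
  refine ⟨1 - C a⁻¹ * X, ?_, by simp, fun x hx ↦ ?_, fun x hx ↦ ?_⟩
  · exact (show (1 - C a⁻¹ * X).natDegree ≤ 1 by compute_degree).trans hn
  · have : x / a ≤ 1 := (div_le_one ha).mpr hx.2
    simp only [eval_sub, eval_one, eval_mul, eval_C, eval_X, abs_le]
    constructor <;> nlinarith [div_nonneg hx.1 ha.le, inv_mul_eq_div a x]
  · rw [le_antisymm hx.2 hx.1, div_self ha.ne', convergenceFactor_one]
    simp [ha.ne']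

end

section

variable {ι : Type*} (s : Finset ι) (lam gam : ι → ℝ)

theorem sInf_residual_le {j : ℕ} (hlam : ∀ i ∈ s, 0 ≤ lam i) {q : ℝ[X]} (hq : q.natDegree ≤ j)
    (hq0 : q.eval 0 = 1) :
    sInf {y : ℝ | ∃ q : ℝ[X], q.natDegree ≤ j ∧ q.eval 0 = 1 ∧
        y = ∑ i ∈ s, lam i * (gam i * q.eval (lam i)) ^ 2} ≤
      ∑ i ∈ s, lam i * (gam i * q.eval (lam i)) ^ 2 := by
  refine csInf_le ⟨0, ?_⟩ ⟨q, hq, hq0, rfl⟩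
  rintro y ⟨p, -, -, rfl⟩
  exact Finset.sum_nonneg fun i hi ↦ mul_nonneg (hlam i hi) (sq_nonneg _)

theorem sum_mul_mul_eval_sq_le (hlam : ∀ i ∈ s, 0 ≤ lam i) (q : ℝ[X]) {M : ℝ}
    (hM : ∀ i ∈ s, |q.eval (lam i)| ≤ M) :
    ∑ i ∈ s, lam i * (gam i * q.eval (lam i)) ^ 2 ≤ M ^ 2 * ∑ i ∈ s, lam i * gam i ^ 2 := by
  rw [Finset.mul_sum]
  refine Finset.sum_le_sum fun i hi ↦ ?_
  have hsq : q.eval (lam i) ^ 2 ≤ M ^ 2 := sq_le_sq' (abs_le.mp (hM i hi)).1 (abs_le.mp (hM i hi)).2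
  calc lam i * (gam i * q.eval (lam i)) ^ 2 = lam i * gam i ^ 2 * q.eval (lam i) ^ 2 := by ring
    _ ≤ lam i * gam i ^ 2 * M ^ 2 := by gcongr; exact mul_nonneg (hlam i hi) (sq_nonneg _)
    _ = M ^ 2 * (lam i * gam i ^ 2) := by ring

end

theorem cg_small_first_component_general (m : ℕ) (hm : 2 ≤ m) (lam gam : ℕ → ℝ)
    (hpos : ∀ i, 1 ≤ i → i ≤ m → 0 < lam i)
    (hmono : ∀ i k, 1 ≤ i → i ≤ k → k ≤ m → lam i ≤ lam k)
    (δ : ℝ) (hδ : 0 < δ) (J : ℕ)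
    (hsmall : ∀ j, 1 ≤ j → j ≤ J →
      lam 1 * gam 1 ^ 2 ≤
        4 * ((Real.sqrt (lam m / lam 2) - 1) / (Real.sqrt (lam m / lam 2) + 1)) ^ (2 * j) * δ *
          ∑ i ∈ Finset.Icc 2 m, lam i * gam i ^ 2) :
    ∀ j, 1 ≤ j → j ≤ J →
      sInf {y : ℝ | ∃ q : Polynomial ℝ, q.natDegree ≤ j ∧ q.eval 0 = 1 ∧
          y = ∑ i ∈ Finset.Icc 1 m, lam i * (gam i * q.eval (lam i)) ^ 2} ≤
        4 * (1 + δ) *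
          ((Real.sqrt (lam m / lam 2) - 1) / (Real.sqrt (lam m / lam 2) + 1)) ^ (2 * j) *
          ∑ i ∈ Finset.Icc 1 m, lam i * gam i ^ 2 := by
  intro j hj1 hjJ
  have hl1 : 0 < lam 1 := hpos 1 le_rfl (by omega)
  have hnonneg : ∀ i ∈ Finset.Icc 1 m, 0 ≤ lam i := fun i hi ↦
    (hpos i (Finset.mem_Icc.mp hi).1 (Finset.mem_Icc.mp hi).2).le
  have hbulk : ∀ i ∈ Finset.Icc 2 m, lam i ∈ Set.Icc (lam 2) (lam m) := fun i hi ↦ by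
    obtain ⟨h2i, him⟩ := Finset.mem_Icc.mp hi
    exact ⟨hmono 2 i (by omega) h2i him, hmono i m (by omega) him le_rfl⟩
  obtain ⟨q, hdeg, hq0, hq_small, hq_bulk⟩ :=
    exists_residual_polynomial (hl1.trans_le (hmono 1 2 le_rfl (by omega) hm))
      (hmono 2 m (by omega) hm le_rfl) hj1
  unfold convergenceFactor at hq_bulk
  set c := (√(lam m / lam 2) - 1) / (√(lam m / lam 2) + 1)
  have hsplit : Finset.Icc 1 m = insert 1 (Finset.Icc 2 m) :=
    (Finset.insert_Icc_add_one_left_eq_Icc (by omega)).symm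
  have hfirst : lam 1 * (gam 1 * q.eval (lam 1)) ^ 2 ≤ lam 1 * gam 1 ^ 2 := by
    rw [mul_pow, ← mul_assoc]
    refine mul_le_of_le_one_right (by positivity) ((sq_le_one_iff_abs_le_one _).mpr ?_)
    exact hq_small _ ⟨hl1.le, hmono 1 2 le_rfl (by omega) hm⟩
  have hrest := sum_mul_mul_eval_sq_le (Finset.Icc 2 m) lam gam
    (fun i hi ↦ hnonneg i (Finset.Icc_subset_Icc_left (by omega) hi)) q
    (fun i hi ↦ hq_bulk _ (hbulk i hi))
  have hc : (2 * c ^ j) ^ 2 = 4 * c ^ (2 * j) := by ring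
  calc _ ≤ ∑ i ∈ Finset.Icc 1 m, lam i * (gam i * q.eval (lam i)) ^ 2 :=
        sInf_residual_le _ lam gam hnonneg hdeg hq0
    _ ≤ lam 1 * gam 1 ^ 2 + 4 * c ^ (2 * j) * ∑ i ∈ Finset.Icc 2 m, lam i * gam i ^ 2 := by
        rw [hsplit, Finset.sum_insert (by simp), ← hc]
        exact add_le_add hfirst hrest
    _ ≤ _ := by
        rw [hsplit, Finset.sum_insert (by simp)]
        linarith [hsmall j hj1 hjJ, mul_nonneg (mul_nonneg (by positivity : (0 : ℝ) ≤ 4 * (1 + δ))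
          ((even_two_mul j).pow_nonneg c)) (by positivity : 0 ≤ lam 1 * gam 1 ^ 2)]

/-- Paper's Theorem 1: if the first eigencomponent of the initial CG error is small
relative to the others, CG convergence in the first `J` iterations is governed by the
reduced condition number `κ₂ = λ_m / λ₂` rather than by `κ₁ = λ_m / λ₁`. Here
`E j = sInf { Σ_{i=1}^m λ_i (γ_i q(λ_i))² : q polynomial, deg q ≤ j, q(0) = 1 }`. -/
theorem cg_small_first_component (m : ℕ) (hm : 2 ≤ m) (lam gam : ℕ → ℝ)
    (hpos : ∀ i, 1 ≤ i → i ≤ m → 0 < lam i)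
    (hmono : ∀ i k, 1 ≤ i → i ≤ k → k ≤ m → lam i ≤ lam k)
    (δ : ℝ) (hδ : 0 < δ) (J : ℕ) (hJ : 1 ≤ J)
    (hsmall : ∀ j, 1 ≤ j → j ≤ J →
      lam 1 * gam 1 ^ 2 ≤
        4 * ((Real.sqrt (lam m / lam 2) - 1) / (Real.sqrt (lam m / lam 2) + 1)) ^ (2 * j) * δ *
          ∑ i ∈ Finset.Icc 2 m, lam i * gam i ^ 2) :
    ∀ j, 1 ≤ j → j ≤ J →
      sInf {y : ℝ | ∃ q : Polynomial ℝ, q.natDegree ≤ j ∧ q.eval 0 = 1 ∧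
          y = ∑ i ∈ Finset.Icc 1 m, lam i * (gam i * q.eval (lam i)) ^ 2} ≤
        4 * (1 + δ) *
          ((Real.sqrt (lam m / lam 2) - 1) / (Real.sqrt (lam m / lam 2) + 1)) ^ (2 * j) *
          ∑ i ∈ Finset.Icc 1 m, lam i * gam i ^ 2 :=
  cg_small_first_component_general m hm lam gam hpos hmono δ hδ J hsmall
end

section
/- Let m ≥ 1, let 2 ≤ s ≤ m, let δ > 0 and J ≥ 1. Assume that for every j with 1 ≤ j ≤ J one has Σ_{i=1}^{s−1} λ_i γ_i² ≤ 4 C_s^{2j} δ · Σ_{i=s}^m λ_i γ_i². Then for every j with 1 ≤ j ≤ J, E_j ≤ 4 (1 + δ) C_s^{2j} · Σ_{i=1}^m λ_i γ_i². (Paper's Theorem 2: if the first s−1 eigencomponents of the initial CG error are small relative to the remaining components, CG convergence in the first J iterations is governed by the constant C_s rather than by C_1.) -/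
/-! With `r = √(λ_m / λ_s)` and `θ = log ((r + 1) / (r - 1))`, so that `e^{-θ} = C_s` and
`cosh θ = (λ_m + λ_s) / (λ_m - λ_s)`, take the residual polynomial
`q(x) = T_j((λ_m + λ_s - 2x) / (λ_m - λ_s)) / cosh (jθ)`, whose value at `0` is `1`.
On `[λ_s, λ_m]` the argument of `T_j` lies in `[-1, 1]`, so `|q| ≤ 1 / cosh (jθ) ≤ 2 C_s^j`;
on `[0, λ_s]` it lies in `[1, cosh θ]`, where `T_j` increases from `1` to `cosh (jθ)`, so
`0 ≤ q ≤ 1`. Hence `E_j ≤ Σ_{i<s} λ_i γ_i² + 4 C_s^{2j} Σ_{i≥s} λ_i γ_i²`, and the smallness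
of the first `s - 1` components bounds the first sum by `4 C_s^{2j} δ Σ_{i≥s} λ_i γ_i²`. -/

open Polynomial Polynomial.Chebyshev Real Set

theorem Polynomial.Chebyshev.monotoneOn_eval_T_real_s1 (n : ℤ) :
    MonotoneOn (fun x ↦ (T ℝ n).eval x) (Ici 1) := by
  intro u hu t ht hut
  dsimp only
  rw [← cosh_arcosh hu, ← cosh_arcosh ht, T_real_cosh, T_real_cosh, cosh_le_cosh, abs_mul,
    abs_mul, abs_of_nonneg (arcosh_nonneg hu), abs_of_nonneg (arcosh_nonneg ht)]
  gcongr
  exact (arcosh_le_arcosh (by linarith [mem_Ici.1 hu]) (by linarith [mem_Ici.1 ht])).2 hut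

theorem Real.inv_cosh_le_two_mul_exp_neg (x : ℝ) : (cosh x)⁻¹ ≤ 2 * exp (-x) := by
  have h : exp (-x) * exp x = 1 := by rw [← exp_add, neg_add_cancel, exp_zero]
  rw [inv_le_iff_one_le_mul₀ (cosh_pos x), cosh_eq]
  nlinarith [sq_nonneg (exp (-x))]

theorem Real.cosh_log_div_sub_one {r : ℝ} (hr : 1 < r) :
    cosh (log ((r + 1) / (r - 1))) = (r ^ 2 + 1) / (r ^ 2 - 1) := by
  have h1 : r - 1 ≠ 0 := by linarith
  have h2 : r ^ 2 - 1 ≠ 0 := by nlinarith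
  rw [cosh_eq, exp_neg, exp_log (by apply div_pos <;> linarith), inv_div]
  field_simp
  ring

theorem exists_residual_poly_bound_of_cosh_eq {a b θ : ℝ} (hab : a < b)
    (hθ : cosh θ = (b + a) / (b - a)) (n : ℕ) :
    ∃ q : ℝ[X], q.natDegree ≤ n ∧ q.eval 0 = 1 ∧ (∀ x ∈ Icc 0 a, |q.eval x| ≤ 1) ∧
      ∀ x ∈ Icc a b, |q.eval x| ≤ 2 * exp (-θ) ^ n := by
  set ℓ : ℝ[X] := C (-2 / (b - a)) * X + C ((b + a) / (b - a))
  have hℓ (x : ℝ) : ℓ.eval x = (b + a - 2 * x) / (b - a) := by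
    simp only [ℓ, eval_add, eval_mul, eval_C, eval_X]; ring
  have hℓ_deg : ℓ.natDegree ≤ 1 := natDegree_linear_le
  have hTθ : (T ℝ n).eval (cosh θ) = cosh (n * θ) := by exact_mod_cast T_real_cosh θ n
  refine ⟨C (cosh (n * θ))⁻¹ * (T ℝ n).comp ℓ, ?_, ?_, ?_, ?_⟩
  · calc (C (cosh (n * θ))⁻¹ * (T ℝ n).comp ℓ).natDegree ≤ (T ℝ n).natDegree * ℓ.natDegree :=
          (natDegree_C_mul_le _ _).trans natDegree_comp_le
      _ ≤ n * 1 := by rw [natDegree_T, Int.natAbs_natCast]; gcongr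
      _ = n := mul_one n
  · rw [eval_mul, eval_C, eval_comp, hℓ, mul_zero, sub_zero, ← hθ, hTθ,
      inv_mul_cancel₀ (cosh_pos _).ne']
  · rintro x ⟨hx0, hxa⟩
    have h1 : 1 ≤ ℓ.eval x := by rw [hℓ, le_div_iff₀ (by linarith)]; linarith
    have h2 : ℓ.eval x ≤ cosh θ := by rw [hℓ, hθ]; gcongr; linarith
    have hT1 := one_le_eval_T_real n h1
    rw [eval_mul, eval_C, eval_comp, abs_of_nonneg (by positivity), inv_mul_le_one₀ (cosh_pos _),
      ← hTθ]
    exact monotoneOn_eval_T_real_s1 n h1 (one_le_cosh θ) h2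
  · rintro x ⟨hax, hxb⟩
    have h1 : |ℓ.eval x| ≤ 1 := by
      rw [hℓ, abs_le, le_div_iff₀ (by linarith), div_le_one (by linarith)]
      constructor <;> linarith
    calc |(C (cosh (n * θ))⁻¹ * (T ℝ n).comp ℓ).eval x|
        = (cosh (n * θ))⁻¹ * |(T ℝ n).eval (ℓ.eval x)| := by
          rw [eval_mul, eval_C, eval_comp, abs_mul, abs_of_pos (inv_pos.2 (cosh_pos _))]
      _ ≤ (cosh (n * θ))⁻¹ :=
          mul_le_of_le_one_right (by positivity) (abs_eval_T_real_le_one n h1)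
      _ ≤ 2 * exp (-(n * θ)) := inv_cosh_le_two_mul_exp_neg _
      _ = 2 * exp (-θ) ^ n := by rw [← exp_nat_mul, mul_neg]

theorem exists_residual_poly_bound {a b : ℝ} (ha : 0 < a) (hab : a ≤ b) (n : ℕ) :
    ∃ q : ℝ[X], q.natDegree ≤ n ∧ q.eval 0 = 1 ∧ (∀ x ∈ Icc 0 a, |q.eval x| ≤ 1) ∧
      ∀ x ∈ Icc a b, |q.eval x| ≤ 2 * ((√(b / a) - 1) / (√(b / a) + 1)) ^ n := by
  obtain hab | rfl := hab.lt_or_eq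
  · set r := √(b / a)
    have hr2 : r ^ 2 = b / a := sq_sqrt (div_pos (ha.trans hab) ha).le
    have hr : 1 < r := by nlinarith [sqrt_nonneg (b / a), (one_lt_div ha).2 hab]
    have hθ : cosh (log ((r + 1) / (r - 1))) = (b + a) / (b - a) := by
      rw [cosh_log_div_sub_one hr, hr2]
      field_simp
    rw [← inv_div, ← exp_log (by apply div_pos <;> linarith : 0 < (r + 1) / (r - 1)),
      ← exp_neg]
    exact exists_residual_poly_bound_of_cosh_eq hab hθ n
  have hℓ (x : ℝ) : (C (-a⁻¹) * X + C 1).eval x = 1 - x / a := by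
    simp only [eval_add, eval_mul, eval_C, eval_X]; ring
  refine ⟨(C (-a⁻¹) * X + C 1) ^ n, ?_, by simp, ?_, ?_⟩
  · exact natDegree_pow_le.trans (mul_le_of_le_one_right (Nat.zero_le n) natDegree_linear_le)
  · rintro x ⟨hx0, hxa⟩
    have h1 : x / a ≤ 1 := (div_le_one ha).2 hxa
    have h2 : 0 ≤ x / a := div_nonneg hx0 ha.le
    rw [eval_pow, hℓ, abs_pow]
    exact pow_le_one₀ (abs_nonneg _) (abs_le.2 ⟨by linarith, by linarith⟩)
  · rintro x ⟨h1, h2⟩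
    obtain rfl : x = a := le_antisymm h2 h1
    rw [eval_pow, hℓ, div_self ha.ne', sqrt_one, sub_self, zero_div, abs_pow, abs_zero]
    linarith [pow_nonneg (le_refl (0 : ℝ)) n]

theorem Finset.sum_Icc_sub_one_add_sum_Icc {M : Type*} [AddCommMonoid M] (f : ℕ → M)
    {a s m : ℕ} (has : a ≤ s) (hs : 0 < s) (hsm : s ≤ m + 1) :
    ∑ i ∈ Icc a (s - 1), f i + ∑ i ∈ Icc s m, f i = ∑ i ∈ Icc a m, f i := by
  rw [Icc_sub_one_right_eq_Ico_of_not_isMin (not_isMin_iff_ne_bot.2 hs.ne'),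
    ← Ico_add_one_right_eq_Icc, ← Ico_add_one_right_eq_Icc]
  exact sum_Ico_consecutive f has hsm

theorem Finset.sum_mul_mul_sq_le {ι : Type*} (t : Finset ι) {w g p : ι → ℝ} {c : ℝ}
    (hw : ∀ i ∈ t, 0 ≤ w i) (hp : ∀ i ∈ t, |p i| ≤ c) :
    ∑ i ∈ t, w i * (g i * p i) ^ 2 ≤ c ^ 2 * ∑ i ∈ t, w i * g i ^ 2 := by
  rw [mul_sum]
  refine sum_le_sum fun i hi ↦ ?_
  have hpc : p i ^ 2 ≤ c ^ 2 := by
    rw [← sq_abs]; exact pow_le_pow_left₀ (abs_nonneg _) (hp i hi) 2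
  calc w i * (g i * p i) ^ 2 = w i * g i ^ 2 * p i ^ 2 := by ring
    _ ≤ w i * g i ^ 2 * c ^ 2 := by gcongr; exact mul_nonneg (hw i hi) (sq_nonneg _)
    _ = c ^ 2 * (w i * g i ^ 2) := by ring

theorem sInf_residual_norm_le {ι : Type*} (t : Finset ι) {lam : ι → ℝ} (gam : ι → ℝ)
    (hlam : ∀ i ∈ t, 0 ≤ lam i) {j : ℕ} {q : ℝ[X]} (hq : q.natDegree ≤ j) (hq0 : q.eval 0 = 1) :
    sInf {y : ℝ | ∃ p : ℝ[X], p.natDegree ≤ j ∧ p.eval 0 = 1 ∧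
        y = ∑ i ∈ t, lam i * (gam i * p.eval (lam i)) ^ 2} ≤
      ∑ i ∈ t, lam i * (gam i * q.eval (lam i)) ^ 2 := by
  refine csInf_le ⟨0, ?_⟩ ⟨q, hq, hq0, rfl⟩
  rintro _ ⟨p, -, -, rfl⟩
  exact Finset.sum_nonneg fun i hi ↦ mul_nonneg (hlam i hi) (sq_nonneg _)

theorem cg_small_first_components_general (m : ℕ) (s : ℕ) (hs : 2 ≤ s) (hsm : s ≤ m)
    (lam gam : ℕ → ℝ)
    (hpos : ∀ i, 1 ≤ i → i ≤ m → 0 < lam i)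
    (hmono : ∀ i k, 1 ≤ i → i ≤ k → k ≤ m → lam i ≤ lam k)
    (δ : ℝ) (hδ : 0 < δ) (J : ℕ)
    (hsmall : ∀ j, 1 ≤ j → j ≤ J →
      ∑ i ∈ Finset.Icc 1 (s - 1), lam i * gam i ^ 2 ≤
        4 * ((Real.sqrt (lam m / lam s) - 1) / (Real.sqrt (lam m / lam s) + 1)) ^ (2 * j) * δ *
          ∑ i ∈ Finset.Icc s m, lam i * gam i ^ 2) :
    ∀ j, 1 ≤ j → j ≤ J →
      sInf {y : ℝ | ∃ q : Polynomial ℝ, q.natDegree ≤ j ∧ q.eval 0 = 1 ∧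
          y = ∑ i ∈ Finset.Icc 1 m, lam i * (gam i * q.eval (lam i)) ^ 2} ≤
        4 * (1 + δ) *
          ((Real.sqrt (lam m / lam s) - 1) / (Real.sqrt (lam m / lam s) + 1)) ^ (2 * j) *
          ∑ i ∈ Finset.Icc 1 m, lam i * gam i ^ 2 := by
  intro j hj1 hjJ
  have hlam : ∀ i ∈ Finset.Icc 1 m, 0 ≤ lam i := fun i hi ↦
    (hpos i (Finset.mem_Icc.1 hi).1 (Finset.mem_Icc.1 hi).2).le
  have hhead_sub : Finset.Icc 1 (s - 1) ⊆ Finset.Icc 1 m := Finset.Icc_subset_Icc le_rfl (by omega)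
  have htail_sub : Finset.Icc s m ⊆ Finset.Icc 1 m := Finset.Icc_subset_Icc (by omega) le_rfl
  obtain ⟨q, hdeg, h0, hhead, htail⟩ :=
    exists_residual_poly_bound (hpos s (by omega) hsm) (hmono s m (by omega) hsm le_rfl) j
  set C := (√(lam m / lam s) - 1) / (√(lam m / lam s) + 1)
  have hhead_sum : ∑ i ∈ Finset.Icc 1 (s - 1), lam i * (gam i * q.eval (lam i)) ^ 2 ≤
      ∑ i ∈ Finset.Icc 1 (s - 1), lam i * gam i ^ 2 := by
    refine (Finset.sum_mul_mul_sq_le _ (c := 1) (fun i hi ↦ hlam i (hhead_sub hi))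
      fun i hi ↦ hhead _ ⟨hlam i (hhead_sub hi), ?_⟩).trans_eq (by rw [one_pow, one_mul])
    exact hmono i s (Finset.mem_Icc.1 hi).1 (by simp at hi; omega) hsm
  have htail_sum : ∑ i ∈ Finset.Icc s m, lam i * (gam i * q.eval (lam i)) ^ 2 ≤
      4 * C ^ (2 * j) * ∑ i ∈ Finset.Icc s m, lam i * gam i ^ 2 := by
    refine (Finset.sum_mul_mul_sq_le _ (fun i hi ↦ hlam i (htail_sub hi))
      fun i hi ↦ htail _ ⟨?_, ?_⟩).trans_eq (by ring) <;> obtain ⟨hsi, him⟩ := Finset.mem_Icc.1 hi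
    exacts [hmono s i (by omega) hsi him, hmono i m (by omega) him le_rfl]
  have hhead_nonneg : 0 ≤ ∑ i ∈ Finset.Icc 1 (s - 1), lam i * gam i ^ 2 :=
    Finset.sum_nonneg fun i hi ↦ mul_nonneg (hlam i (hhead_sub hi)) (sq_nonneg _)
  have hC : 0 ≤ C ^ (2 * j) := by rw [pow_mul]; positivity
  have hsplit (f : ℕ → ℝ) :=
    Finset.sum_Icc_sub_one_add_sum_Icc f (a := 1) (by omega) (by omega) (hsm.trans m.le_succ)
  refine (sInf_residual_norm_le _ gam hlam hdeg h0).trans ?_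
  rw [← hsplit, ← hsplit]
  linarith [hsmall j hj1 hjJ, mul_nonneg (mul_nonneg (by linarith : (0 : ℝ) ≤ 1 + δ) hC)
    hhead_nonneg]

/-- Paper's Theorem 2: if the first `s - 1` eigencomponents of the initial CG error are
small relative to the remaining components, CG convergence in the first `J` iterations is
governed by the constant `C_s` rather than by `C_1`. Here
`E j = sInf { Σ_{i=1}^m λ_i (γ_i q(λ_i))² : q polynomial, deg q ≤ j, q(0) = 1 }` and
`C_s = (√κ_s − 1)/(√κ_s + 1)` with `κ_s = λ_m / λ_s`. -/
theorem cg_small_first_components (m : ℕ) (hm : 1 ≤ m) (s : ℕ) (hs : 2 ≤ s) (hsm : s ≤ m)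
    (lam gam : ℕ → ℝ)
    (hpos : ∀ i, 1 ≤ i → i ≤ m → 0 < lam i)
    (hmono : ∀ i k, 1 ≤ i → i ≤ k → k ≤ m → lam i ≤ lam k)
    (δ : ℝ) (hδ : 0 < δ) (J : ℕ) (hJ : 1 ≤ J)
    (hsmall : ∀ j, 1 ≤ j → j ≤ J →
      ∑ i ∈ Finset.Icc 1 (s - 1), lam i * gam i ^ 2 ≤
        4 * ((Real.sqrt (lam m / lam s) - 1) / (Real.sqrt (lam m / lam s) + 1)) ^ (2 * j) * δ *
          ∑ i ∈ Finset.Icc s m, lam i * gam i ^ 2) :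
    ∀ j, 1 ≤ j → j ≤ J →
      sInf {y : ℝ | ∃ q : Polynomial ℝ, q.natDegree ≤ j ∧ q.eval 0 = 1 ∧
          y = ∑ i ∈ Finset.Icc 1 m, lam i * (gam i * q.eval (lam i)) ^ 2} ≤
        4 * (1 + δ) *
          ((Real.sqrt (lam m / lam s) - 1) / (Real.sqrt (lam m / lam s) + 1)) ^ (2 * j) *
          ∑ i ∈ Finset.Icc 1 m, lam i * gam i ^ 2 :=
  cg_small_first_components_general m s hs hsm lam gam hpos hmono δ hδ J hsmall
end

section
/- Let 0 < a ≤ b be real numbers, let κ = b/a and C = (√κ − 1)/(√κ + 1), and let j ∈ ℕ. Then there exists a real polynomial q of degree at most j with q(0) = 1 such that |q(t)| ≤ 2 C^j for all t ∈ [a, b]. (Existence of the shifted-and-scaled Chebyshev minimax polynomial used to derive the classical CG convergence estimate.) -/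
open Polynomial Polynomial.Chebyshev

lemma chebT_natDegree_le (n : ℕ) : (T ℝ (n : ℤ)).natDegree ≤ n := by
  induction n using Nat.twoStepInduction with
  | zero => simp [T_zero]
  | one => simp [T_one]
  | more n ih1 ih2 =>
    have h : T ℝ ((n : ℤ) + 2) = 2 * X * T ℝ ((n : ℤ) + 1) - T ℝ (n : ℤ) := T_add_two ℝ n
    have hc : ((n + 2 : ℕ) : ℤ) = (n : ℤ) + 2 := by push_cast; ring
    rw [hc, h]
    refine le_trans (natDegree_sub_le _ _) (max_le ?_ (ih1.trans (by omega)))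
    refine le_trans (natDegree_mul_le) ?_
    have h1 : ((n + 1 : ℕ) : ℤ) = (n : ℤ) + 1 := by push_cast; ring
    have := ih2
    rw [h1] at this
    calc (2 * X : ℝ[X]).natDegree + (T ℝ ((n:ℤ)+1)).natDegree
        ≤ 1 + (n + 1) := by
          gcongr
          · exact (natDegree_mul_le).trans (by simp)
      _ = n + 2 := by omega

lemma chebT_real_cosh (n : ℤ) (x : ℝ) :
    (T ℝ n).eval (Real.cosh x) = Real.cosh (n * x) := by
  have key := T_complex_cos ((x : ℂ) * Complex.I) n
  rw [Complex.cos_mul_I] at key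
  have h2 : Complex.cos ((n : ℂ) * ((x : ℂ) * Complex.I)) = Complex.cosh ((n : ℂ) * x) := by
    rw [← mul_assoc, Complex.cos_mul_I]
  rw [h2] at key
  have h3 : ((Real.cosh x : ℝ) : ℂ) = Complex.cosh (x : ℂ) := Complex.ofReal_cosh x
  have h4 := complex_ofReal_eval_T (Real.cosh x) n
  rw [h3, key] at h4
  apply Complex.ofReal_injective
  rw [h4]
  push_cast
  ring_nf

lemma chebT_abs_le (n : ℤ) (y : ℝ) (hy : y ∈ Set.Icc (-1:ℝ) 1) :
    |(T ℝ n).eval y| ≤ 1 := by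
  have : y = Real.cos (Real.arccos y) := (Real.cos_arccos hy.1 hy.2).symm
  rw [this, T_real_cos]
  exact Real.abs_cos_le_one _

/-- Existence of the shifted-and-scaled Chebyshev minimax polynomial used to derive the
classical CG convergence estimate: for `0 < a ≤ b`, `κ = b/a` and
`C = (√κ − 1)/(√κ + 1)`, there is a polynomial `q` of degree at most `j` with `q(0) = 1`
such that `|q(t)| ≤ 2 C^j` on `[a, b]`. -/
theorem exists_chebyshev_minimax_poly (a b : ℝ) (ha : 0 < a) (hab : a ≤ b) (j : ℕ) :
    ∃ q : Polynomial ℝ, q.natDegree ≤ j ∧ q.eval 0 = 1 ∧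
      ∀ t ∈ Set.Icc a b,
        |q.eval t| ≤ 2 * ((Real.sqrt (b / a) - 1) / (Real.sqrt (b / a) + 1)) ^ j := by
  rcases eq_or_lt_of_le hab with rfl | hlt
  · -- degenerate case b = a
    refine ⟨(1 - Polynomial.C a⁻¹ * X)^j, ?_, ?_, ?_⟩
    · calc ((1 - Polynomial.C a⁻¹ * X)^j).natDegree
          ≤ j * (1 - Polynomial.C a⁻¹ * X).natDegree := natDegree_pow_le
        _ ≤ j * 1 := by
            gcongr
            exact (natDegree_sub_le _ _).trans
              (max_le (by simp) ((natDegree_C_mul_le _ _).trans (by simp)))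
        _ = j := mul_one j
    · simp
    · intro t ht
      have ht' : t = a := le_antisymm ht.2 ht.1
      subst ht'
      have hdiv : t / t = 1 := div_self ha.ne'
      simp only [eval_pow, eval_sub, eval_one, eval_mul, eval_C, eval_X,
        inv_mul_cancel₀ ha.ne', hdiv, Real.sqrt_one, sub_self]
      rcases j with _ | j <;> norm_num
  · -- main case a < b
    set c := Real.sqrt (b/a) with hc
    have hκ : 1 < b / a := (one_lt_div ha).mpr hlt
    have hc1 : 1 < c := by
      rw [hc, show (1:ℝ) = Real.sqrt 1 by simp]
      exact Real.sqrt_lt_sqrt (by norm_num) hκ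
    have hc0 : 0 < c - 1 := by linarith
    have hcp : 0 < c + 1 := by linarith
    set r := (c+1)/(c-1) with hr
    have hr1 : 1 < r := (one_lt_div hc0).mpr (by linarith)
    have hr0 : 0 < r := by linarith
    have hc2 : c^2 = b/a := Real.sq_sqrt (by positivity)
    have hb : b = a * c^2 := by rw [hc2]; field_simp
    have hba : (0:ℝ) < b - a := by linarith
    set s := (b+a)/(b-a) with hs
    have hsr : s = (r + r⁻¹)/2 := by
      rw [hs, hr, hb]
      rw [div_eq_div_iff (by nlinarith) (by norm_num)]
      field_simp
      ring
    have hcosh : Real.cosh (Real.log r) = (r + r⁻¹)/2 := Real.cosh_log hr0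
    have hTs : (T ℝ (j:ℤ)).eval s = (r^j + (r^j)⁻¹)/2 := by
      rw [hsr, ← hcosh, chebT_real_cosh]
      have hl : ((j:ℤ):ℝ) * Real.log r = Real.log (r^j) := by
        push_cast; rw [Real.log_pow]
      rw [hl, Real.cosh_log (by positivity)]
    have hTpos : 0 < (T ℝ (j:ℤ)).eval s := by rw [hTs]; positivity
    have hTge : r^j/2 ≤ (T ℝ (j:ℤ)).eval s := by
      rw [hTs]
      have : (0:ℝ) < (r^j)⁻¹ := by positivity
      linarith
    refine ⟨Polynomial.C ((T ℝ (j:ℤ)).eval s)⁻¹ *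
      (T ℝ (j:ℤ)).comp (Polynomial.C s - Polynomial.C (2/(b-a)) * X), ?_, ?_, ?_⟩
    · refine (natDegree_C_mul_le _ _).trans (natDegree_comp_le.trans ?_)
      calc (T ℝ (j:ℤ)).natDegree * (Polynomial.C s - Polynomial.C (2/(b-a)) * X).natDegree
          ≤ j * 1 := by
            gcongr
            · exact chebT_natDegree_le j
            · exact (natDegree_sub_le _ _).trans
                (max_le (by simp) ((natDegree_C_mul_le _ _).trans (by simp)))
        _ = j := mul_one j
    · simp only [eval_mul, eval_C, eval_comp, eval_sub, eval_X, mul_zero, sub_zero]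
      exact inv_mul_cancel₀ hTpos.ne'
    · intro t ht
      have hu : s - 2/(b-a) * t ∈ Set.Icc (-1:ℝ) 1 := by
        have hueq : s - 2/(b-a) * t = (b + a - 2*t)/(b-a) := by
          rw [hs]; field_simp
        constructor
        · rw [hueq, le_div_iff₀ hba]
          linarith [ht.2]
        · rw [hueq, div_le_one hba]
          linarith [ht.1]
      have habs := chebT_abs_le (j:ℤ) _ hu
      have hCr : (c - 1)/(c + 1) = r⁻¹ := by rw [hr, inv_div]
      rw [hCr]
      simp only [eval_mul, eval_C, eval_comp, eval_sub, eval_X, abs_mul,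
        abs_of_pos (inv_pos.mpr hTpos)]
      calc ((T ℝ (j:ℤ)).eval s)⁻¹ * |(T ℝ (j:ℤ)).eval (s - 2/(b-a) * t)|
          ≤ ((T ℝ (j:ℤ)).eval s)⁻¹ * 1 := by
            gcongr
        _ = ((T ℝ (j:ℤ)).eval s)⁻¹ := mul_one _
        _ ≤ (r^j/2)⁻¹ := by gcongr
        _ = 2 * (r⁻¹)^j := by rw [inv_div, div_eq_mul_inv, inv_pow]
end

section
/- Let n ≥ j ≥ 1, let 0 < μ_1 < μ_2 < ... < μ_n be distinct positive real numbers and w_1, ..., w_n > 0 positive weights. Then there exists a real polynomial q* of degree at most j with q*(0) = 1 minimizing Σ_{i=1}^n w_i (q(μ_i))² over all real polynomials q of degree at most j with q(0) = 1, and every such minimizer has j real roots (counted with multiplicity), all of which lie in the interval [μ_1, μ_n]. (Localization of the roots of the optimal CG residual polynomial — the Ritz values — inside the spectral interval, underlying equation (3.3) of the paper.) -/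
/-!
The residual polynomials of degree at most `j` form an affine subspace of `ℝ[X]`, and the
functional is the squared Euclidean norm of its image under the linear map
`q ↦ (√wᵢ q(μᵢ))ᵢ`. That image is an affine subspace of a finite-dimensional space, hence
closed, so it has a point of least norm: a minimizer exists.

For the roots, write a minimizer `q` as `f * p` and replace the factor `f` by some `f'` with
`f'(0) = f(0)` and `|f'| < |f|` at every node. Unless `q` vanishes at all nodes, this strictly
decreases the functional, so no such replacement may exist. It does exist for `f = 1` if
`deg q < j` (take `1 - x/μₙ`), for a quadratic factor with non-real roots `z, z̄` (take
`(x - |z|)²`), and for a linear factor `x - r` with `r ∉ [μ₁, μₙ]`. If `q` vanishes at all nodes,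
then `n ≤ deg q ≤ j ≤ n` and the roots of `q` are exactly the nodes.
-/

open Polynomial

def residualPolys (j : ℕ) : AffineSubspace ℝ ℝ[X] where
  carrier := {q | q.natDegree ≤ j ∧ q.eval 0 = 1}
  smul_vsub_vadd_mem' c p₁ p₂ p₃ h₁ h₂ h₃ := by
    refine ⟨?_, by simp [h₁.2, h₂.2, h₃.2]⟩
    simp only [vsub_eq_sub, vadd_eq_add]
    exact (natDegree_add_le _ _).trans <| max_le
      ((natDegree_smul_le _ _).trans <| (natDegree_sub_le _ _).trans <| max_le h₁.1 h₂.1) h₃.1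

def weightedSqSum {ι : Type*} (s : Finset ι) (w μ : ι → ℝ) (q : ℝ[X]) : ℝ :=
  ∑ i ∈ s, w i * q.eval (μ i) ^ 2

theorem exists_isMinOn_weightedSqSum {ι : Type*} {s : Finset ι} {w : ι → ℝ} (μ : ι → ℝ)
    (hw : ∀ i ∈ s, 0 ≤ w i) (P : AffineSubspace ℝ ℝ[X]) (hP : (P : Set ℝ[X]).Nonempty) :
    ∃ q ∈ P, IsMinOn (weightedSqSum s w μ) P q := by
  let L : ℝ[X] →ₗ[ℝ] EuclideanSpace ℝ s := (EuclideanSpace.equiv s ℝ).symm.toLinearMap ∘ₗ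
    LinearMap.pi fun i => √(w i) • leval (μ i)
  have hL : ∀ q, ‖L q‖ ^ 2 = weightedSqSum s w μ q := by
    intro q
    rw [EuclideanSpace.real_norm_sq_eq, weightedSqSum, ← Finset.sum_coe_sort s]
    refine Finset.sum_congr rfl fun i _ => ?_
    simp [L, mul_pow, Real.sq_sqrt (hw i i.2)]
  let K := P.map L.toAffineMap
  obtain ⟨_, ⟨q, hq, rfl⟩, hdist⟩ :=
    K.closed_of_finiteDimensional.exists_infDist_eq_dist (hP.image L) 0
  refine ⟨q, hq, fun q' hq' => ?_⟩
  have hle : Metric.infDist 0 (K : Set (EuclideanSpace ℝ s)) ≤ dist 0 (L q') :=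
    Metric.infDist_le_dist_of_mem ⟨q', hq', rfl⟩
  rw [hdist, dist_zero_left, dist_zero_left] at hle
  change weightedSqSum s w μ q ≤ weightedSqSum s w μ q'
  rw [← hL, ← hL]
  exact pow_le_pow_left₀ (norm_nonneg _) hle 2

theorem Polynomial.exists_quadratic_dvd_of_card_roots_lt {p : ℝ[X]}
    (h : Multiset.card p.roots < p.natDegree) :
    ∃ z : ℂ, z.im ≠ 0 ∧ X ^ 2 - C (2 * z.re) * X + C (‖z‖ ^ 2) ∣ p := by
  obtain ⟨g, hpg, hdeg, hroots⟩ := p.exists_prod_multiset_X_sub_C_mul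
  have hg : g ≠ 0 := by
    rintro rfl
    simp only [natDegree_zero] at hdeg
    omega
  obtain ⟨z, hz⟩ := IsAlgClosed.exists_aeval_eq_zero ℂ g
    (natDegree_pos_iff_degree_pos.1 (by omega)).ne'
  have him : z.im ≠ 0 := by
    intro him
    have hx : g.IsRoot z.re := by
      rw [← Complex.ext (by simp) (by simp [him] : ((z.re : ℂ)).im = z.im)] at hz
      simpa [← Complex.coe_algebraMap, aeval_algebraMap_apply] using hz
    simpa [hroots] using (mem_roots hg).2 hx
  exact ⟨z, him, (g.quadratic_dvd_of_aeval_eq_zero_im_ne_zero hz him).trans (Dvd.intro_left _ hpg)⟩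

theorem sq_sub_norm_lt_of_im_ne_zero {z : ℂ} (hz : z.im ≠ 0) {x : ℝ} (hx : 0 < x) :
    (x - ‖z‖) ^ 2 < x ^ 2 - 2 * z.re * x + ‖z‖ ^ 2 := by
  have hre : z.re < ‖z‖ := (le_abs_self _).trans_lt (Complex.abs_re_lt_norm.2 hz)
  nlinarith

theorem exists_linear_sq_lt_sq_sub {a b r : ℝ} (ha : 0 < a) (hab : a ≤ b)
    (hr : r ∉ Set.Icc a b) :
    ∃ f : ℝ[X], f.natDegree ≤ 1 ∧ f.eval 0 = -r ∧
      ∀ x ∈ Set.Icc a b, f.eval x ^ 2 < (x - r) ^ 2 := by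
  -- A negative root is reflected; a root `r = t * c` beyond the endpoint `c` is moved to `c`,
  -- rescaling the factor by `t`.
  have rescale : ∀ t c x : ℝ,
      (x - t * c) ^ 2 - (t * (x - c)) ^ 2 = x * ((1 - t) * ((1 + t) * x - 2 * (t * c))) :=
    fun _ _ _ => by ring
  rw [Set.mem_Icc, not_and_or, not_le, not_le] at hr
  rcases hr with hlt | hgt
  · rcases lt_or_ge r 0 with hneg | hnonneg
    · refine ⟨-X - C r, by compute_degree!, by simp, fun x hx => ?_⟩
      simp only [eval_sub, eval_neg, eval_X, eval_C]
      nlinarith [ha.trans_le hx.1]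
    · obtain ⟨t, ht0, ht1, rfl⟩ : ∃ t, 0 ≤ t ∧ t < 1 ∧ r = t * a :=
        ⟨r / a, div_nonneg hnonneg ha.le, (div_lt_one ha).2 hlt, (div_mul_cancel₀ r ha.ne').symm⟩
      refine ⟨C t * (X - C a), by compute_degree!, by simp, fun x hx => ?_⟩
      have hpos : 0 < (1 + t) * x - 2 * (t * a) := by nlinarith [hx.1]
      simp only [eval_mul, eval_sub, eval_X, eval_C]
      nlinarith [rescale t a x, mul_pos (ha.trans_le hx.1) (mul_pos (sub_pos.2 ht1) hpos)]
  · have hb : 0 < b := ha.trans_le hab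
    obtain ⟨t, ht1, rfl⟩ : ∃ t, 1 < t ∧ r = t * b :=
      ⟨r / b, (one_lt_div hb).2 hgt, (div_mul_cancel₀ r hb.ne').symm⟩
    refine ⟨C t * (X - C b), by compute_degree!, by simp, fun x hx => ?_⟩
    have hneg : (1 + t) * x - 2 * (t * b) < 0 := by nlinarith [hx.2]
    simp only [eval_mul, eval_sub, eval_X, eval_C]
    nlinarith [rescale t b x,
      mul_pos (ha.trans_le hx.1) (mul_pos_of_neg_of_neg (sub_neg.2 ht1) hneg)]

theorem Polynomial.roots_eq_map_of_eval_eq_zero {ι : Type*} {s : Finset ι} {μ : ι → ℝ}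
    {q : ℝ[X]} (hq : q ≠ 0) (hinj : Set.InjOn μ s) (hdeg : q.natDegree ≤ s.card)
    (hz : ∀ i ∈ s, q.eval (μ i) = 0) : q.roots = s.val.map μ := by
  refine (Multiset.eq_of_le_of_card_le ?_ ?_).symm
  · rw [Multiset.le_iff_subset (s.nodup.map_on fun i hi k hk => hinj hi hk)]
    intro r hr
    obtain ⟨i, hi, rfl⟩ := Multiset.mem_map.1 hr
    exact (mem_roots hq).2 (hz i hi)
  · simpa using (card_roots' q).trans hdeg

section Minimizer

variable {ι : Type*} {s : Finset ι} {w μ : ι → ℝ} {j : ℕ} (hw : ∀ i ∈ s, 0 < w i)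
include hw

theorem weightedSqSum_mul_lt {f f' p : ℝ[X]}
    (hlt : ∀ i ∈ s, f'.eval (μ i) ^ 2 < f.eval (μ i) ^ 2)
    (hne : ∃ i ∈ s, (f * p).eval (μ i) ≠ 0) :
    weightedSqSum s w μ (f' * p) < weightedSqSum s w μ (f * p) := by
  refine Finset.sum_lt_sum (fun i hi => ?_) ?_
  · simp only [eval_mul, mul_pow]
    exact mul_le_mul_of_nonneg_left
      (mul_le_mul_of_nonneg_right (hlt i hi).le (sq_nonneg _)) (hw i hi).le
  · obtain ⟨i, hi, hfp⟩ := hne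
    rw [eval_mul] at hfp
    have hp : 0 < p.eval (μ i) ^ 2 := sq_pos_of_ne_zero (right_ne_zero_of_mul hfp)
    refine ⟨i, hi, ?_⟩
    simp only [eval_mul, mul_pow]
    exact mul_lt_mul_of_pos_left (mul_lt_mul_of_pos_right (hlt i hi) hp) (hw i hi)

theorem not_isMinOn_of_replace_factor {f f' p : ℝ[X]}
    (hfp : f * p ∈ residualPolys j) (hne : ∃ i ∈ s, (f * p).eval (μ i) ≠ 0)
    (h0 : f'.eval 0 = f.eval 0) (hdeg : (f' * p).natDegree ≤ j)
    (hlt : ∀ i ∈ s, f'.eval (μ i) ^ 2 < f.eval (μ i) ^ 2) :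
    ¬ IsMinOn (weightedSqSum s w μ) (residualPolys j) (f * p) := by
  have hmem : f' * p ∈ residualPolys j := by
    refine ⟨hdeg, ?_⟩
    rw [eval_mul, h0, ← eval_mul]
    exact hfp.2
  exact fun hmin => (weightedSqSum_mul_lt hw hlt hne).not_ge (hmin hmem)

theorem not_isMinOn_of_replace_factor_of_natDegree_le {f f' p : ℝ[X]}
    (hfp : f * p ∈ residualPolys j) (hne : ∃ i ∈ s, (f * p).eval (μ i) ≠ 0)
    (h0 : f'.eval 0 = f.eval 0) (hdeg : f'.natDegree ≤ f.natDegree)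
    (hlt : ∀ i ∈ s, f'.eval (μ i) ^ 2 < f.eval (μ i) ^ 2) :
    ¬ IsMinOn (weightedSqSum s w μ) (residualPolys j) (f * p) := by
  have hf0 : f * p ≠ 0 := fun h => by simpa [h] using hfp.2
  refine not_isMinOn_of_replace_factor hw hfp hne h0 ?_ hlt
  calc (f' * p).natDegree ≤ f.natDegree + p.natDegree := natDegree_mul_le_of_le hdeg le_rfl
    _ = (f * p).natDegree :=
      (natDegree_mul (left_ne_zero_of_mul hf0) (right_ne_zero_of_mul hf0)).symm
    _ ≤ j := hfp.1

variable {a b : ℝ} {q : ℝ[X]} (ha : 0 < a) (hμ : ∀ i ∈ s, μ i ∈ Set.Icc a b)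
  (hq : q ∈ residualPolys j)
  (hmin : IsMinOn (weightedSqSum s w μ) (residualPolys j) q)
  (hne : ∃ i ∈ s, q.eval (μ i) ≠ 0)
include ha hμ hq hmin hne

theorem natDegree_eq_of_isMinOn : q.natDegree = j := by
  refine le_antisymm hq.1 (not_lt.1 fun hlt => ?_)
  rw [← one_mul q] at hq hne hmin
  refine not_isMinOn_of_replace_factor (f' := 1 - C b⁻¹ * X) hw hq hne (by simp) ?_
    (fun i hi => ?_) hmin
  · calc ((1 - C b⁻¹ * X) * q).natDegree ≤ 1 + q.natDegree :=
          natDegree_mul_le_of_le (by compute_degree) le_rfl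
      _ ≤ j := by omega
  · obtain ⟨hai, hib⟩ := hμ i hi
    have hx : 0 < μ i := ha.trans_le hai
    have hxb : b⁻¹ * μ i ≤ 1 := by
      rw [inv_mul_le_iff₀ (hx.trans_le hib), mul_one]
      exact hib
    have hx0 : 0 < b⁻¹ * μ i := mul_pos (inv_pos.2 (hx.trans_le hib)) hx
    simp only [eval_sub, eval_one, eval_mul, eval_C, eval_X, one_pow]
    nlinarith

theorem card_roots_eq_natDegree_of_isMinOn : Multiset.card q.roots = q.natDegree := by
  refine le_antisymm (card_roots' q) (not_lt.1 fun hlt => ?_)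
  obtain ⟨z, hz, p, rfl⟩ := exists_quadratic_dvd_of_card_roots_lt hlt
  refine not_isMinOn_of_replace_factor_of_natDegree_le (f' := (X - C ‖z‖) ^ 2) hw hq hne
    (by simp) ?_ (fun i hi => ?_) hmin
  · rw [natDegree_pow, natDegree_X_sub_C]
    refine le_natDegree_of_ne_zero ?_
    rw [coeff_add, coeff_sub, coeff_X_pow_self, coeff_C_mul_X, coeff_C]
    norm_num
  · simp only [eval_pow, eval_sub, eval_add, eval_mul, eval_X, eval_C]
    exact pow_lt_pow_left₀ (sq_sub_norm_lt_of_im_ne_zero hz (ha.trans_le (hμ i hi).1))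
      (sq_nonneg _) two_ne_zero

theorem mem_Icc_of_mem_roots_of_isMinOn {r : ℝ} (hr : r ∈ q.roots) : r ∈ Set.Icc a b := by
  by_contra hout
  have hab : a ≤ b := by
    obtain ⟨i, hi, -⟩ := hne
    exact (hμ i hi).1.trans (hμ i hi).2
  obtain ⟨f', hdeg, h0, hlt⟩ := exists_linear_sq_lt_sq_sub ha hab hout
  obtain ⟨p, rfl⟩ := dvd_iff_isRoot.2 (isRoot_of_mem_roots hr)
  refine not_isMinOn_of_replace_factor_of_natDegree_le hw hq hne (by simpa using h0)
    (by rwa [natDegree_X_sub_C]) (fun i hi => ?_) hmin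
  simpa using hlt (μ i) (hμ i hi)

end Minimizer

theorem optimal_residual_poly_roots_general (n j : ℕ) (hjn : j ≤ n)
    (μ w : ℕ → ℝ)
    (hμpos : ∀ i, 1 ≤ i → i ≤ n → 0 < μ i)
    (hμmono : ∀ i k, 1 ≤ i → i < k → k ≤ n → μ i < μ k)
    (hw : ∀ i, 1 ≤ i → i ≤ n → 0 < w i) :
    (∃ qstar : Polynomial ℝ, qstar.natDegree ≤ j ∧ qstar.eval 0 = 1 ∧
        ∀ q : Polynomial ℝ, q.natDegree ≤ j → q.eval 0 = 1 →
          ∑ i ∈ Finset.Icc 1 n, w i * (qstar.eval (μ i)) ^ 2 ≤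
            ∑ i ∈ Finset.Icc 1 n, w i * (q.eval (μ i)) ^ 2) ∧
    (∀ qstar : Polynomial ℝ, qstar.natDegree ≤ j → qstar.eval 0 = 1 →
        (∀ q : Polynomial ℝ, q.natDegree ≤ j → q.eval 0 = 1 →
          ∑ i ∈ Finset.Icc 1 n, w i * (qstar.eval (μ i)) ^ 2 ≤
            ∑ i ∈ Finset.Icc 1 n, w i * (q.eval (μ i)) ^ 2) →
        Multiset.card qstar.roots = j ∧
          ∀ r ∈ qstar.roots, r ∈ Set.Icc (μ 1) (μ n)) := by
  have hw' : ∀ i ∈ Finset.Icc 1 n, 0 < w i := fun i hi =>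
    hw i (Finset.mem_Icc.1 hi).1 (Finset.mem_Icc.1 hi).2
  have hmono : StrictMonoOn μ (Set.Icc 1 n) := fun i hi k hk hik => hμmono i k hi.1 hik hk.2
  have hIcc : ∀ i ∈ Finset.Icc 1 n, μ i ∈ Set.Icc (μ 1) (μ n) := by
    intro i hi
    rw [Finset.mem_Icc] at hi
    exact ⟨hmono.monotoneOn ⟨le_rfl, hi.1.trans hi.2⟩ hi hi.1,
      hmono.monotoneOn hi ⟨hi.1.trans hi.2, le_rfl⟩ hi.2⟩
  refine ⟨?_, fun q hdeg h0 hmin => ?_⟩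
  · obtain ⟨q, hq, hmin⟩ := exists_isMinOn_weightedSqSum μ
      (fun i hi => (hw' i hi).le) (residualPolys j) ⟨1, by simp, by simp⟩
    exact ⟨q, hq.1, hq.2, fun q' hdeg' h0' => hmin ⟨hdeg', h0'⟩⟩
  have hq : q ∈ residualPolys j := ⟨hdeg, h0⟩
  have hmin' : IsMinOn (weightedSqSum (Finset.Icc 1 n) w μ) (residualPolys j) q :=
    fun q' hq' => hmin q' hq'.1 hq'.2
  by_cases hz : ∀ i ∈ Finset.Icc 1 n, q.eval (μ i) = 0
  · have hq0 : q ≠ 0 := fun h => by simp [h] at h0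
    have hroots := roots_eq_map_of_eval_eq_zero hq0 (by simpa using hmono.injOn)
      (by simpa using hdeg.trans hjn) hz
    refine ⟨?_, fun r hr => ?_⟩
    · have hcard := card_roots' q
      rw [hroots, Multiset.card_map, Finset.card_val, Nat.card_Icc] at hcard ⊢
      omega
    · obtain ⟨i, hi, rfl⟩ := Multiset.mem_map.1 (hroots ▸ hr)
      exact hIcc i hi
  · push Not at hz
    have ha : 0 < μ 1 := by
      obtain ⟨i, hi, -⟩ := hz
      exact hμpos 1 le_rfl ((Finset.mem_Icc.1 hi).1.trans (Finset.mem_Icc.1 hi).2)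
    exact ⟨(card_roots_eq_natDegree_of_isMinOn hw' ha hIcc hq hmin' hz).trans
        (natDegree_eq_of_isMinOn hw' ha hIcc hq hmin' hz),
      fun r hr => mem_Icc_of_mem_roots_of_isMinOn hw' ha hIcc hq hmin' hz hr⟩

/-- Localization of the roots of the optimal CG residual polynomial (the Ritz values)
inside the spectral interval: for distinct positive nodes `μ_1 < ... < μ_n` and positive
weights `w_i`, there exists a polynomial of degree at most `j` with constant term `1`
minimizing `Σ_i w_i q(μ_i)²`, and every such minimizer has `j` real roots counted with
multiplicity, all of which lie in `[μ_1, μ_n]`. -/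
theorem optimal_residual_poly_roots (n j : ℕ) (hj : 1 ≤ j) (hjn : j ≤ n)
    (μ w : ℕ → ℝ)
    (hμpos : ∀ i, 1 ≤ i → i ≤ n → 0 < μ i)
    (hμmono : ∀ i k, 1 ≤ i → i < k → k ≤ n → μ i < μ k)
    (hw : ∀ i, 1 ≤ i → i ≤ n → 0 < w i) :
    (∃ qstar : Polynomial ℝ, qstar.natDegree ≤ j ∧ qstar.eval 0 = 1 ∧
        ∀ q : Polynomial ℝ, q.natDegree ≤ j → q.eval 0 = 1 →
          ∑ i ∈ Finset.Icc 1 n, w i * (qstar.eval (μ i)) ^ 2 ≤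
            ∑ i ∈ Finset.Icc 1 n, w i * (q.eval (μ i)) ^ 2) ∧
    (∀ qstar : Polynomial ℝ, qstar.natDegree ≤ j → qstar.eval 0 = 1 →
        (∀ q : Polynomial ℝ, q.natDegree ≤ j → q.eval 0 = 1 →
          ∑ i ∈ Finset.Icc 1 n, w i * (qstar.eval (μ i)) ^ 2 ≤
            ∑ i ∈ Finset.Icc 1 n, w i * (q.eval (μ i)) ^ 2) →
        Multiset.card qstar.roots = j ∧
          ∀ r ∈ qstar.roots, r ∈ Set.Icc (μ 1) (μ n)) :=
  optimal_residual_poly_roots_general n j hjn μ w hμpos hμmono hw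
end
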